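/- arXiv:2104.00731 — 2 statements merged into one kernel-verified Lean document; each statement's English description precedes it below -/
import Mathlib

section
/- Let $E=[0,\infty)$, $c>0$, $\alpha\in(1-e^{-c-1},1]$ with $(1-\alpha)e^c<1$, and $K=\ln\big(\frac{\alpha e^c}{1-(1-\alpha)e^c}\big)$. Then the function $v(x)=x\wedge K$ satisfies the Bellman equation $e^{v(x)}=e^x\wedge e^c(\alpha e^{v(0)}+(1-\alpha)e^{v(x+1)})$ for all $x\in E$. -/
/-!
Write `a = α e^c` and `b = (1 - α) e^c`, so that `0 ≤ b < 1` and the right-hand side of the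
Bellman equation is `min (e^x) (a + b e^{v(x+1)})`. The number `e^K = a / (1 - b)` is the fixed
point of the contracting increasing affine map `u ↦ a + b u`, which therefore maps
`(-∞, e^K]` into `[u, e^K]`. Hence `e^{v(x+1)} ≤ a + b e^{v(x+1)} ≤ e^K`, and these two bounds
alone force `min (e^x) (a + b e^{v(x+1)}) = e^{min x K}`.
-/

open Real

lemma le_affine_le_fixedPoint {a b u : ℝ} (hb0 : 0 ≤ b) (hb1 : b < 1) (hu : u ≤ a / (1 - b)) :
    u ≤ a + b * u ∧ a + b * u ≤ a / (1 - b) := by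
  have h1b : 0 < 1 - b := by linarith
  rw [le_div_iff₀ h1b] at hu
  refine ⟨by nlinarith, ?_⟩
  rw [le_div_iff₀ h1b]
  nlinarith

lemma exp_min_eq_min_of_le_of_le {x y K t : ℝ} (hxy : x ≤ y)
    (hlow : exp (min y K) ≤ t) (hup : t ≤ exp K) :
    exp (min x K) = min (exp x) t := by
  rcases le_total x K with hxK | hKx
  · have hxt : exp x ≤ t := (exp_le_exp.mpr (le_min hxy hxK)).trans hlow
    rw [min_eq_left hxK, min_eq_left hxt]
  · have ht : t = exp K := hup.antisymm (by rwa [min_eq_right (hKx.trans hxy)] at hlow)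
    rw [min_eq_right hKx, ht, min_eq_right (exp_le_exp.mpr hKx)]

/-- for `c > 0`, `α ∈ (1 - e^{-c-1}, 1]` with `(1-α)e^c < 1`, and
`K = ln(α e^c / (1 - (1-α)e^c))`, the function `v(x) = x ⊓ K` satisfies the Bellman
equation `e^{v x} = e^x ⊓ e^c (α e^{v 0} + (1-α) e^{v(x+1)})` on `E = [0, ∞)`. -/
theorem stmt11 (c α : ℝ) (hc : 0 < c)
    (hα : α ∈ Set.Ioc (1 - Real.exp (-c - 1)) 1)
    (hconv : (1 - α) * Real.exp c < 1) :
    ∀ x : ℝ, 0 ≤ x →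
      Real.exp (min x (Real.log (α * Real.exp c / (1 - (1 - α) * Real.exp c))))
        = min (Real.exp x)
          (Real.exp c *
            (α * Real.exp (min 0 (Real.log (α * Real.exp c / (1 - (1 - α) * Real.exp c))))
              + (1 - α) *
                Real.exp (min (x + 1)
                  (Real.log (α * Real.exp c / (1 - (1 - α) * Real.exp c)))))) := by
  obtain ⟨hα_lower, hα_le_one⟩ := hα
  have hα_pos : 0 < α := by linarith [exp_lt_one_iff.mpr (by linarith : -c - 1 < 0)]
  have hb0 : 0 ≤ (1 - α) * exp c := by have := exp_pos c; nlinarith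
  have h1b : 0 < 1 - (1 - α) * exp c := by linarith
  set K := log (α * exp c / (1 - (1 - α) * exp c))
  have hexpK : exp K = α * exp c / (1 - (1 - α) * exp c) := exp_log (by positivity)
  have hK_nonneg : 0 ≤ K := by
    refine log_nonneg ((one_le_div h1b).mpr ?_)
    nlinarith [one_le_exp hc.le]
  intro x _
  obtain ⟨hlow, hup⟩ := le_affine_le_fixedPoint (a := α * exp c) hb0 hconv
    (hexpK ▸ exp_le_exp.mpr (min_le_right (x + 1) K))
  rw [min_eq_left hK_nonneg, exp_zero]
  exact exp_min_eq_min_of_le_of_le (le_add_of_nonneg_right zero_le_one)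
    (by linarith) (by linarith)
end

section
/- Let $c>0$ and $\alpha\in(1-e^{-c},1-e^{-c-1}]$, so $(1-\alpha)e^c<1\le(1-\alpha)e^{c+1}$, and set $K=\ln\big(\frac{\alpha e^c}{1-(1-\alpha)e^c}\big)$. Then both $v_1(x)=x\wedge K$ and $v_2(x)=x$ solve the Bellman equation $e^{v(x)}=e^x\wedge e^c(\alpha e^{v(0)}+(1-\alpha)e^{v(x+1)})$ on $[0,\infty)$, and $v_1(x)<v_2(x)$ for $x>K$; in particular the Bellman equation has at least two distinct solutions in $\{v: 0\le v(x)\le x\}$. -/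
/-!
`x ↦ x` solves the Bellman equation because `(1-α)e^{c+1} ≥ 1` makes continuing at least as
costly as stopping everywhere. Truncating at `K` also gives a solution because `e^K` is the fixed
point `L = e^c (α + (1-α) L)` of the equation on the plateau `x ≥ K`; `(1-α)e^c < 1` makes that
fixed point positive, and `c ≥ 0` puts `K = log L` above `0`.
-/

open Real

lemma one_sub_mul_exp_lt_one {c α : ℝ} (hα : 1 - exp (-c) < α) : (1 - α) * exp c < 1 := by
  calc (1 - α) * exp c < exp (-c) * exp c := by gcongr; linarith
    _ = 1 := by rw [← exp_add, neg_add_cancel, exp_zero]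

lemma one_le_one_sub_mul_exp_add_one {c α : ℝ} (hα : α ≤ 1 - exp (-c - 1)) :
    1 ≤ (1 - α) * exp (c + 1) := by
  calc (1 : ℝ) = exp (-c - 1) * exp (c + 1) := by rw [← exp_add]; norm_num
    _ ≤ (1 - α) * exp (c + 1) := by gcongr; linarith

lemma mul_add_mul_div_one_sub_mul {a α : ℝ} (h : (1 - α) * a < 1) :
    a * (α + (1 - α) * (α * a / (1 - (1 - α) * a))) = α * a / (1 - (1 - α) * a) := by
  have hd : 1 - (1 - α) * a ≠ 0 := by linarith
  rw [eq_div_iff hd]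
  linear_combination (a * (1 - α)) * div_mul_cancel₀ (α * a) hd

lemma one_le_div_one_sub_mul {a α : ℝ} (ha : 1 ≤ a) (h : (1 - α) * a < 1) :
    1 ≤ α * a / (1 - (1 - α) * a) := by
  rw [le_div_iff₀ (by linarith)]
  linarith

lemma exp_le_exp_mul_add_mul_exp_add_one {c α : ℝ} (hα : 0 ≤ α)
    (hgrowth : 1 ≤ (1 - α) * exp (c + 1)) (x y : ℝ) :
    exp x ≤ exp c * (α * exp y + (1 - α) * exp (x + 1)) := by
  calc exp x ≤ (1 - α) * exp (c + 1) * exp x := le_mul_of_one_le_left (exp_pos x).le hgrowth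
    _ = exp c * ((1 - α) * exp (x + 1)) := by rw [exp_add c, exp_add x]; ring
    _ ≤ exp c * (α * exp y + (1 - α) * exp (x + 1)) := by
      gcongr
      exact le_add_of_nonneg_left (by positivity)

lemma exp_min_eq_min_exp_mul_add {c α K : ℝ} (hα : 0 ≤ α)
    (hgrowth : 1 ≤ (1 - α) * exp (c + 1)) (hK : 0 ≤ K)
    (hfix : exp c * (α + (1 - α) * exp K) = exp K) (x : ℝ) :
    exp (min x K) = min (exp x)
      (exp c * (α * exp (min 0 K) + (1 - α) * exp (min (x + 1) K))) := by
  rw [min_eq_left hK]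
  rcases le_total K x with hKx | hxK
  · rw [min_eq_right hKx, min_eq_right (show K ≤ x + 1 by linarith), exp_zero, mul_one, hfix,
      min_eq_right (exp_le_exp.mpr hKx)]
  rw [min_eq_left hxK]
  rcases le_total (x + 1) K with hx1K | hKx1
  · rw [min_eq_left hx1K, min_eq_left (exp_le_exp_mul_add_mul_exp_add_one hα hgrowth x 0)]
  · rw [min_eq_right hKx1, exp_zero, mul_one, hfix, min_eq_left (exp_le_exp.mpr hxK)]

/-- for `c > 0` and `α ∈ (1 - e^{-c}, 1 - e^{-c-1}]` (so
`(1-α)e^c < 1 ≤ (1-α)e^{c+1}`), with `K = ln(α e^c / (1 - (1-α)e^c))`, both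
`v₁(x) = x ⊓ K` and `v₂(x) = x` solve the Bellman equation
`e^{v x} = e^x ⊓ e^c (α e^{v 0} + (1-α) e^{v(x+1)})` on `[0, ∞)`, and `v₁ < v₂` for
`x > K`; in particular the equation has at least two distinct solutions in
`{v : 0 ≤ v(x) ≤ x}`. -/
theorem stmt13 (c α : ℝ) (hc : 0 < c)
    (hα : α ∈ Set.Ioc (1 - Real.exp (-c)) (1 - Real.exp (-c - 1))) :
    (∀ x : ℝ, 0 ≤ x →
      Real.exp (min x (Real.log (α * Real.exp c / (1 - (1 - α) * Real.exp c))))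
        = min (Real.exp x)
          (Real.exp c *
            (α * Real.exp (min 0 (Real.log (α * Real.exp c / (1 - (1 - α) * Real.exp c))))
              + (1 - α) *
                Real.exp (min (x + 1)
                  (Real.log (α * Real.exp c / (1 - (1 - α) * Real.exp c)))))))
    ∧ (∀ x : ℝ, 0 ≤ x →
      Real.exp x
        = min (Real.exp x)
          (Real.exp c * (α * Real.exp 0 + (1 - α) * Real.exp (x + 1))))
    ∧ (∀ x : ℝ, Real.log (α * Real.exp c / (1 - (1 - α) * Real.exp c)) < x →
        min x (Real.log (α * Real.exp c / (1 - (1 - α) * Real.exp c))) < x) := by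
  obtain ⟨hα_gt, hα_le⟩ := hα
  have hα_nonneg : 0 ≤ α := by linarith [exp_le_one_iff.mpr (neg_nonpos.mpr hc.le)]
  have hgrowth := one_le_one_sub_mul_exp_add_one hα_le
  have hβ := one_sub_mul_exp_lt_one hα_gt
  have hL := one_le_div_one_sub_mul (one_le_exp hc.le) hβ
  have hexpK :
      exp (log (α * exp c / (1 - (1 - α) * exp c))) = α * exp c / (1 - (1 - α) * exp c) :=
    exp_log (by linarith)
  refine ⟨fun x _ => ?_, fun x _ => ?_, fun x hx => min_lt_of_right_lt hx⟩
  · refine exp_min_eq_min_exp_mul_add hα_nonneg hgrowth (log_nonneg hL) ?_ x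
    rw [hexpK]
    exact mul_add_mul_div_one_sub_mul hβ
  · exact (min_eq_left (exp_le_exp_mul_add_mul_exp_add_one hα_nonneg hgrowth x 0)).symm
end
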